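/- arXiv:1905.12289 — 3 statements merged into one kernel-verified Lean document; each statement's English description precedes it below -/
import Mathlib

section
/- (Rowbottom property of normal measures) Let U be a normal κ-complete ultrafilter on a measurable cardinal κ and let n < ω. For every function f : [κ]^n → 2 there exists a set H ∈ U which is homogeneous for f, i.e., f is constant on [H]^n. -/
open Cardinal

/-- Rowbottom property of normal measures: every partition of
`[κ]^n` into 2 pieces has a homogeneous set in any normal κ-complete
ultrafilter on a measurable cardinal κ. -/
theorem rowbottom_fixed_arity
    (κ : Cardinal.{0}) (hκ : ℵ₀ < κ)
    (U : Set (Set {α : Ordinal // α < κ.ord}))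
    (h_ultra : ∀ A : Set {α : Ordinal // α < κ.ord}, A ∈ U ∨ Aᶜ ∈ U)
    (h_proper : (∅ : Set {α : Ordinal // α < κ.ord}) ∉ U)
    (h_up : ∀ A B : Set {α : Ordinal // α < κ.ord}, A ∈ U → A ⊆ B → B ∈ U)
    (h_complete : ∀ (ι : Type) (A : ι → Set {α : Ordinal // α < κ.ord}),
      Nonempty ι → #ι < κ → (∀ i, A i ∈ U) → (⋂ i, A i) ∈ U)
    (h_normal : ∀ (f : {α : Ordinal // α < κ.ord} → Ordinal)
      (S : Set {α : Ordinal // α < κ.ord}), S ∈ U →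
      (∀ β ∈ S, β.1 ≠ 0 → f β < β.1) → ∃ γ, {β | β ∈ S ∧ f β = γ} ∈ U)
    (n : ℕ) (f : Finset {α : Ordinal // α < κ.ord} → Fin 2) :
    ∃ H ∈ U, ∃ c : Fin 2,
      ∀ s : Finset {α : Ordinal // α < κ.ord},
        ↑s ⊆ H → s.card = n → f s = c := by
  classical
  have h_inter : ∀ A B : Set {α : Ordinal // α < κ.ord}, A ∈ U → B ∈ U → A ∩ B ∈ U := by
    intro A B hA hB
    have hcard : #Bool < κ := by
      rw [Cardinal.mk_bool]
      exact lt_trans (by exact_mod_cast Cardinal.nat_lt_aleph0 2) hκ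
    have := h_complete Bool (fun b => if b then A else B) ⟨true⟩ hcard
      (fun b => by cases b <;> simpa)
    have heq : (⋂ b : Bool, if b then A else B) = A ∩ B := by
      ext x
      simp only [Set.mem_iInter, Set.mem_inter_iff]
      constructor
      · intro h; exact ⟨by simpa using h true, by simpa using h false⟩
      · rintro ⟨h1, h2⟩ b; cases b <;> simpa
    rwa [heq] at this
  have h_univ : (Set.univ : Set {α : Ordinal // α < κ.ord}) ∈ U := by
    rcases h_ultra ∅ with h | h
    · exact absurd h h_proper
    · simpa using h
  induction n generalizing f with
  | zero =>
    exact ⟨Set.univ, h_univ, f ∅, fun s _ hs => by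
      rw [Finset.card_eq_zero.mp hs]⟩
  | succ n IH =>
    choose Hf hHf cf hcf using fun α : {α : Ordinal // α < κ.ord} =>
      IH (fun s => f (insert α s))
    obtain ⟨c, A, hA, hAc⟩ : ∃ c, ∃ A ∈ U, ∀ α ∈ A, cf α = c := by
      rcases h_ultra {α | cf α = 0} with h | h
      · exact ⟨0, _, h, fun α hα => hα⟩
      · refine ⟨1, _, h, fun α hα => ?_⟩
        have hne : cf α ≠ 0 := hα
        omega
    set D : Set {α : Ordinal // α < κ.ord} := {α | ∀ β, β < α → α ∈ Hf β} with hD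
    have hDU : D ∈ U := by
      by_contra hnot
      have hDc : Dᶜ ∈ U := (h_ultra D).resolve_left hnot
      have hex : ∀ α ∈ Dᶜ, ∃ β, β < α ∧ α ∉ Hf β := by
        intro α hα
        by_contra h
        push_neg at h
        exact hα (fun β hβ => h β hβ)
      set g : {α : Ordinal // α < κ.ord} → Ordinal := fun α =>
        if h : ∃ β, β < α ∧ α ∉ Hf β then (Classical.choose h).1 else 0 with hg
      have hreg : ∀ β ∈ Dᶜ, β.1 ≠ 0 → g β < β.1 := by
        intro β hβ _
        have h := hex β hβ
        simp only [hg, dif_pos h]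
        exact (Classical.choose_spec h).1
      obtain ⟨γ, hS⟩ := h_normal g Dᶜ hDc hreg
      have hSne : {β | β ∈ Dᶜ ∧ g β = γ}.Nonempty := by
        rcases Set.eq_empty_or_nonempty {β | β ∈ Dᶜ ∧ g β = γ} with h | h
        · rw [h] at hS; exact absurd hS h_proper
        · exact h
      obtain ⟨α₀, hα₀D, hα₀g⟩ := hSne
      have hex0 := hex α₀ hα₀D
      set β₀ := Classical.choose hex0 with hβ₀
      have hγ : β₀.1 = γ := by
        rw [← hα₀g]
        simp only [hg, dif_pos hex0]
        exact congrArg Subtype.val hβ₀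
      have hint : {β | β ∈ Dᶜ ∧ g β = γ} ∩ Hf β₀ ∈ U := h_inter _ _ hS (hHf β₀)
      have hempty : {β | β ∈ Dᶜ ∧ g β = γ} ∩ Hf β₀ = ∅ := by
        ext α
        simp only [Set.mem_inter_iff, Set.mem_setOf_eq, Set.mem_empty_iff_false, iff_false,
          not_and]
        rintro ⟨hαD, hαg⟩ hαH
        have hexα := hex α hαD
        have heqβ : Classical.choose hexα = β₀ := by
          apply Subtype.ext
          rw [hγ, ← hαg]
          simp only [hg, dif_pos hexα]
        have hnotin := (Classical.choose_spec hexα).2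
        rw [heqβ] at hnotin
        exact hnotin hαH
      rw [hempty] at hint
      exact h_proper hint
    refine ⟨A ∩ D, h_inter _ _ hA hDU, c, ?_⟩
    intro s hsub hcard
    have hne : s.Nonempty := Finset.card_pos.mp (by omega)
    set α := s.min' hne with hα
    have hαs : α ∈ s := s.min'_mem hne
    have hαA : α ∈ A := (hsub hαs).1
    have hcardE : (s.erase α).card = n := by
      rw [Finset.card_erase_of_mem hαs, hcard]; omega
    have hsubE : ↑(s.erase α) ⊆ Hf α := by
      intro β hβ
      rw [Finset.mem_coe, Finset.mem_erase] at hβ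
      have hβs : β ∈ s := hβ.2
      have hβD : β ∈ D := (hsub hβs).2
      have hlt : α < β := lt_of_le_of_ne (s.min'_le β hβs) (Ne.symm hβ.1)
      exact hβD α hlt
    have hfs := hcf α (s.erase α) hsubE hcardE
    rw [Finset.insert_erase hαs, hAc α hαA] at hfs
    exact hfs
end

section
/- Let U be a normal κ-complete ultrafilter on a measurable cardinal κ. For every function f : [κ]^{<ω} → 2 there is a set H ∈ U and a function g : ω → 2 such that for every finite subset s of H, f(s) = g(|s|); that is, the value of f on finite subsets of H depends only on their cardinality. -/
/-!
Normality, assumed in its pressing-down form, makes `U` closed under diagonal intersections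
`{β | ∀ α < β, β ∈ F α}`: otherwise a regressive choice of `α < β` with `β ∉ F α` on a set in `U`
would be constant, `= α`, on a set in `U`, which then misses `F α ∈ U`.

Homogeneity for `n`-element sets follows by induction on `n`: for each `α`, the induction
hypothesis applied to `s ↦ f (insert α s)` gives a set `H α ∈ U` and a colour `c α`; the
ultrafilter fixes a colour `c₀` on a set in `U`, and on its intersection with the diagonal
intersection of the `H α` every `(n+1)`-element set `s` has colour `c (min s) = c₀`, since
`s \ {min s} ⊆ H (min s)`. Intersecting the homogeneous sets for all `n` stays in `U` because `U`
is countably complete.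
-/

open Cardinal Set Filter

section Normal

variable {X : Type*} [LinearOrder X]

def diagInter (F : X → Set X) : Set X := {b | ∀ a < b, b ∈ F a}

def Filter.IsNormal (l : Filter X) : Prop :=
  ∀ F : X → Set X, (∀ a, F a ∈ l) → diagInter F ∈ l

theorem Ultrafilter.isNormal_of_exists_fiber_mem {L : Ultrafilter X}
    (hL : ∀ (g : X → X) (S : Set X), S ∈ L → (∀ b ∈ S, g b < b) →
      ∃ a, {b | b ∈ S ∧ g b = a} ∈ L) :
    (L : Filter X).IsNormal := by
  intro F hF
  by_contra hD
  have hDc : (diagInter F)ᶜ ∈ L := Ultrafilter.compl_mem_iff_notMem.mpr hD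
  have hwitness : ∀ b ∈ (diagInter F)ᶜ, ∃ a < b, b ∉ F a := fun b hb ↦ by
    simpa [diagInter] using hb
  choose! g hg_lt hg_notMem using hwitness
  obtain ⟨a, ha⟩ := hL g _ hDc hg_lt
  obtain ⟨b, ⟨hbD, rfl⟩, hbF⟩ := L.nonempty_of_mem (inter_mem ha (hF a))
  exact hg_notMem b hbD hbF

theorem Finset.coe_erase_min'_subset_of_subset_diagInter {F : X → Set X} {s : Finset X}
    (hs : s.Nonempty) (hsF : ↑s ⊆ diagInter F) : ↑(s.erase (s.min' hs)) ⊆ F (s.min' hs) :=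
  fun _ hb ↦ hsF (Finset.mem_of_mem_erase hb) _ (Finset.min'_lt_of_mem_erase_min' _ hs hb)

end Normal

theorem Ultrafilter.exists_preimage_singleton_mem {X C : Type*} [Finite C] (L : Ultrafilter X)
    (c : X → C) : ∃ c₀, c ⁻¹' {c₀} ∈ L := by
  obtain ⟨c₀, hc₀⟩ := (L.map c).eq_pure_of_finite
  exact ⟨c₀, Ultrafilter.mem_map.mp (hc₀ ▸ rfl)⟩

namespace Filter.IsNormal

variable {X C : Type*} [LinearOrder X] [Finite C] {L : Ultrafilter X}

theorem exists_homogeneous_of_card_eq (hL : (L : Filter X).IsNormal) (n : ℕ)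
    (f : Finset X → C) :
    ∃ H ∈ L, ∃ c : C, ∀ s : Finset X, ↑s ⊆ H → s.card = n → f s = c := by
  induction n generalizing f with
  | zero => exact ⟨univ, univ_mem, f ∅, fun s _ hs ↦ by rw [Finset.card_eq_zero.mp hs]⟩
  | succ n ih =>
    choose H hH c hc using fun a ↦ ih (fun s ↦ f (insert a s))
    obtain ⟨c₀, hc₀⟩ := L.exists_preimage_singleton_mem c
    refine ⟨c ⁻¹' {c₀} ∩ diagInter H, inter_mem hc₀ (hL H hH), c₀, fun s hs hcard ↦ ?_⟩
    have hne : s.Nonempty := Finset.card_pos.mp (by omega)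
    have hmin := s.min'_mem hne
    calc f s = f (insert (s.min' hne) (s.erase (s.min' hne))) := by rw [Finset.insert_erase hmin]
      _ = c (s.min' hne) :=
        hc _ _ (Finset.coe_erase_min'_subset_of_subset_diagInter hne (hs.trans inter_subset_right))
          (by rw [Finset.card_erase_of_mem hmin, hcard, Nat.add_sub_cancel])
      _ = c₀ := (hs hmin).1

theorem exists_homogeneous [CountableInterFilter (L : Filter X)] (hL : (L : Filter X).IsNormal)
    (f : Finset X → C) :
    ∃ H ∈ L, ∃ g : ℕ → C, ∀ s : Finset X, ↑s ⊆ H → f s = g s.card := by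
  choose H hH g hg using fun n ↦ hL.exists_homogeneous_of_card_eq n f
  exact ⟨⋂ n, H n, countable_iInter_mem.mpr hH, g,
    fun s hs ↦ hg _ s (hs.trans (iInter_subset H s.card)) rfl⟩

end Filter.IsNormal

theorem Set.Countable.sInter_mem_of_iInter_nat_mem {X : Type*} {U : Set (Set X)}
    {S : Set (Set X)} (hS : S.Countable) (huniv : univ ∈ U)
    (hU : ∀ A : ℕ → Set X, (∀ n, A n ∈ U) → (⋂ n, A n) ∈ U) (hSU : S ⊆ U) : ⋂₀ S ∈ U := by
  rcases S.eq_empty_or_nonempty with rfl | hne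
  · rwa [sInter_empty]
  · obtain ⟨A, rfl⟩ := hS.exists_eq_range hne
    rw [sInter_range]
    exact hU A fun n ↦ hSU (mem_range_self n)

theorem exists_fiber_mem_of_regressive {o : Ordinal} {L : Ultrafilter {α : Ordinal // α < o}}
    (h_normal : ∀ (f : {α : Ordinal // α < o} → Ordinal) (S : Set {α : Ordinal // α < o}),
      S ∈ L → (∀ β ∈ S, β.1 ≠ 0 → f β < β.1) → ∃ γ, {β | β ∈ S ∧ f β = γ} ∈ L)
    (g : {α : Ordinal // α < o} → {α : Ordinal // α < o}) (S : Set {α : Ordinal // α < o})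
    (hS : S ∈ L) (hg : ∀ b ∈ S, g b < b) : ∃ a, {b | b ∈ S ∧ g b = a} ∈ L := by
  obtain ⟨γ, hγ⟩ := h_normal (fun b ↦ (g b).1) S hS fun b hb _ ↦ hg b hb
  obtain ⟨b, -, rfl⟩ := L.nonempty_of_mem hγ
  exact ⟨g b, by simpa only [Subtype.ext_iff] using hγ⟩

/-- Rowbottom partition property for `[κ]^{<ω}`: for a normal
κ-complete ultrafilter U on a measurable κ and `f : [κ]^{<ω} → 2`, there is
`H ∈ U` such that the value of `f` on finite subsets of `H` depends only on
their cardinality. -/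
theorem rowbottom_finite_subsets
    (κ : Cardinal.{0}) (hκ : ℵ₀ < κ)
    (U : Set (Set {α : Ordinal // α < κ.ord}))
    (h_ultra : ∀ A : Set {α : Ordinal // α < κ.ord}, A ∈ U ∨ Aᶜ ∈ U)
    (h_proper : (∅ : Set {α : Ordinal // α < κ.ord}) ∉ U)
    (h_up : ∀ A B : Set {α : Ordinal // α < κ.ord}, A ∈ U → A ⊆ B → B ∈ U)
    (h_complete : ∀ (ι : Type) (A : ι → Set {α : Ordinal // α < κ.ord}),
      Nonempty ι → #ι < κ → (∀ i, A i ∈ U) → (⋂ i, A i) ∈ U)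
    (h_normal : ∀ (f : {α : Ordinal // α < κ.ord} → Ordinal)
      (S : Set {α : Ordinal // α < κ.ord}), S ∈ U →
      (∀ β ∈ S, β.1 ≠ 0 → f β < β.1) → ∃ γ, {β | β ∈ S ∧ f β = γ} ∈ U)
    (f : Finset {α : Ordinal // α < κ.ord} → Fin 2) :
    ∃ H ∈ U, ∃ g : ℕ → Fin 2,
      ∀ s : Finset {α : Ordinal // α < κ.ord}, ↑s ⊆ H → f s = g s.card := by
  have huniv : Set.univ ∈ U := by simpa using (h_ultra ∅).resolve_left h_proper
  have h_countable (A : ℕ → Set {α : Ordinal // α < κ.ord}) (hA : ∀ n, A n ∈ U) :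
      (⋂ n, A n) ∈ U :=
    h_complete ℕ A ⟨0⟩ (by simpa using hκ) hA
  have hU (S : Set (Set {α : Ordinal // α < κ.ord})) (hS : S.Countable) (hSU : S ⊆ U) :
      ⋂₀ S ∈ U :=
    hS.sInter_mem_of_iInter_nat_mem huniv h_countable hSU
  let F : Filter {α : Ordinal // α < κ.ord} := .ofCountableInter U hU h_up
  let L : Ultrafilter {α : Ordinal // α < κ.ord} := .ofComplNotMemIff F fun A ↦
    ⟨(h_ultra A).resolve_right,
      fun hA hAc ↦ h_proper (inter_compl_self A ▸ inter_mem (f := F) hA hAc)⟩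
  have : CountableInterFilter (L : Filter {α : Ordinal // α < κ.ord}) :=
    countableInter_ofCountableInter U hU h_up
  exact (Ultrafilter.isNormal_of_exists_fiber_mem
    (exists_fiber_mem_of_regressive (L := L) h_normal)).exists_homogeneous f
end

section
/- (Finite diagonal intersection for a discrete product of measures) Let κ be regular, ⟨κ_α : α < κ⟩ an increasing sequence of measurable cardinals below κ such that sup_{β<α} κ_β < κ_α for every α < κ, and U_α a normal κ_α-complete ultrafilter on κ_α for each α. Fix a length sequence γ⃗ ∈ ⊕_{α<κ} ω (a κ-sequence of natural numbers with finite support). Suppose for every stem s with length sequence γ⃗ and every α < κ we are given B^s_α ∈ U_α with min B^s_α ≥ max s(α). Then there exist sets C_α ∈ U_α (α < κ) such that for every stem s with length sequence γ⃗ satisfying s(α) ∈ (C_α)^{<ω} for all α, we have C_α \ (max s(α) + 1) ⊆ B^s_α for all α < κ. -/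
open Cardinal

/-- A stem relative to a discrete sequence of cardinals `κs` below `κ`:
a κ-sequence of strictly increasing finite sequences, `s α` consisting of
ordinals below `κs α`, with finite support. -/
def IsStem (κ : Cardinal.{0}) (κs : {α : Ordinal // α < κ.ord} → Cardinal.{0})
    (s : {α : Ordinal // α < κ.ord} → List Ordinal) : Prop :=
  (∀ α, (s α).Chain' (· < ·)) ∧
  (∀ α, ∀ x ∈ s α, x < (κs α).ord) ∧
  {α | s α ≠ []}.Finite

/-- The maximum of a finite sequence of ordinals (0 for the empty sequence). -/
noncomputable def listMax (l : List Ordinal) : Ordinal := l.foldr max 0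

set_option linter.unusedSectionVars false
set_option linter.unusedVariables false
set_option linter.unnecessarySimpa false
set_option maxHeartbeats 1000000
open Set

-- ordinal bound lemma
lemma ordle (κ : Cardinal.{0}) (κs : {α : Ordinal // α < κ.ord} → Cardinal.{0})
    (hbelow : ∀ α, κs α < κ) (hinc : ∀ α β, α < β → κs α < κs β) :
    ∀ (o : Ordinal) (h : o < κ.ord), o ≤ (κs ⟨o, h⟩).ord := by
  intro o
  induction o using Ordinal.induction with
  | h j IH =>
    intro hj
    by_contra hcon
    push_neg at hcon
    have hηκ : (κs ⟨j, hj⟩).ord < κ.ord := Cardinal.ord_lt_ord.2 (hbelow _)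
    have h1 := IH _ hcon hηκ
    have h2 : κs ⟨(κs ⟨j, hj⟩).ord, hηκ⟩ < κs ⟨j, hj⟩ := hinc _ _ (Subtype.mk_lt_mk.2 hcon)
    exact absurd (lt_of_le_of_lt h1 (Cardinal.ord_lt_ord.2 h2)) (lt_irrefl _)

-- generic fold lemmas for coding
lemma fold_len {ι : Type*} (L : List ι) (s : ι → List Ordinal) :
    (L.foldr (fun β acc => s β ++ acc) []).length = (L.map (fun β => (s β).length)).sum := by
  induction L with
  | nil => simp
  | cons b L ih => simp [ih, Function.comp_def]

lemma fold_mem {ι : Type*} (L : List ι) (s : ι → List Ordinal) (z : Ordinal)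
    (hz : z ∈ L.foldr (fun β acc => s β ++ acc) []) : ∃ β ∈ L, z ∈ s β := by
  induction L with
  | nil => simp at hz
  | cons b L ih =>
    simp only [List.foldr_cons, List.mem_append] at hz
    rcases hz with h | h
    · exact ⟨b, by simp, h⟩
    · obtain ⟨β, hβ, hmem⟩ := ih h
      exact ⟨β, by simp [hβ], hmem⟩

lemma fold_inj {ι : Type*} (L : List ι) (s t : ι → List Ordinal)
    (hlen : ∀ β ∈ L, (s β).length = (t β).length)
    (heq : L.foldr (fun β acc => s β ++ acc) [] = L.foldr (fun β acc => t β ++ acc) []) :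
    ∀ β ∈ L, s β = t β := by
  induction L with
  | nil => simp
  | cons b L ih =>
    simp only [List.foldr_cons] at heq
    obtain ⟨h1, h2⟩ := List.append_inj heq (hlen b (by simp))
    intro β hβ
    rcases List.mem_cons.1 hβ with rfl | hβ
    · exact h1
    · exact ih (fun β h => hlen β (by simp [h])) h2 β hβ

lemma listMax_le_iff {l : List Ordinal} {b : Ordinal} :
    listMax l ≤ b ↔ ∀ z ∈ l, z ≤ b := by
  induction l with
  | nil => simp [listMax]
  | cons a l ih =>
    show max a (listMax l) ≤ b ↔ _
    simp [max_le_iff, ih]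

lemma le_listMax {l : List Ordinal} {z : Ordinal} (h : z ∈ l) : z ≤ listMax l := by
  induction l with
  | nil => simp at h
  | cons a l ih =>
    rcases List.mem_cons.1 h with rfl | h
    · exact le_max_left _ _
    · exact le_trans (ih h) (le_max_right _ _)

lemma listMax_lt_iff {l : List Ordinal} {b : Ordinal} (hb : 0 < b) :
    listMax l < b ↔ ∀ z ∈ l, z < b := by
  induction l with
  | nil => simpa [listMax]
  | cons a l ih =>
    show max a (listMax l) < b ↔ _
    simp [max_lt_iff, ih]

lemma listMax_append (l₁ l₂ : List Ordinal) :
    listMax (l₁ ++ l₂) = max (listMax l₁) (listMax l₂) := by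
  induction l₁ with
  | nil => simp [listMax]
  | cons a l ih => simp [listMax, max_assoc] at *; rw [ih]

section UF
variable (θ : Cardinal.{0}) (V : Set (Set Ordinal.{0}))
variable (hθ : ℵ₀ < θ)
variable (hsub : ∀ A ∈ V, A ⊆ Set.Iio θ.ord)
variable (hultra : ∀ A ⊆ Set.Iio θ.ord, A ∈ V ∨ (Set.Iio θ.ord \ A) ∈ V)
variable (hproper : (∅ : Set Ordinal) ∉ V)
variable (hup : ∀ A ∈ V, ∀ B ⊆ Set.Iio θ.ord, A ⊆ B → B ∈ V)
variable (hcomplete : ∀ (ι : Type) (A : ι → Set Ordinal),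
      Nonempty ι → #ι < θ → (∀ i, A i ∈ V) → (⋂ i, A i) ∈ V)
variable (hnormal : ∀ (f : Ordinal → Ordinal), ∀ S ∈ V,
      (∀ x ∈ S, x ≠ 0 → f x < x) → ∃ c, {x | x ∈ S ∧ f x = c} ∈ V)

include hsub hultra hproper in
lemma V1 : Set.Iio θ.ord ∈ V := by
  rcases hultra (Set.Iio θ.ord) (subset_refl _) with h | h
  · exact h
  · simp at h; exact absurd h hproper

include hproper in
lemma V2 : ∀ A ∈ V, A.Nonempty := by
  intro A hA
  rcases A.eq_empty_or_nonempty with rfl | h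
  · exact absurd hA hproper
  · exact h

include hθ hsub hultra hproper hcomplete in
lemma V3 : ∀ A ∈ V, ∀ B ∈ V, A ∩ B ∈ V := by
  intro A hA B hB
  have h2 : (2 : Cardinal.{0}) < ℵ₀ := by
    exact_mod_cast Cardinal.nat_lt_aleph0 2
  have := hcomplete Bool (fun b => if b then A else B) ⟨true⟩
    (lt_trans (by simpa using h2) hθ) (by rintro (_|_) <;> simpa)
  have heq : (⋂ b : Bool, (fun b => if b then A else B) b) = A ∩ B := by
    ext x; simp [Set.mem_iInter, Bool.forall_bool, and_comm]
  rwa [heq] at this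

include hθ hsub hultra hproper hup hcomplete in
lemma V4 (b : Ordinal) (hb : b.card < θ) (D : Ordinal → Set Ordinal)
    (hD : ∀ ζ, D ζ ∈ V) :
    {x ∈ Set.Iio θ.ord | ∀ ζ < b, x ∈ D ζ} ∈ V := by
  have hIio := V1 θ V hsub hultra hproper
  rcases eq_or_ne b 0 with rfl | hb0
  · refine hup _ hIio _ (fun x hx => hx.1) (fun x hx => ⟨hx, fun ζ hζ => ?_⟩)
    exact absurd hζ not_lt_zero
  · have hne : Nonempty b.ToType := Ordinal.nonempty_toType_iff.2 hb0
    set e := Ordinal.ToType.mk (o := b) with he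
    have hmem : (⋂ i : b.ToType, (D (e.symm i).1 ∩ Set.Iio θ.ord)) ∈ V := by
      refine hcomplete _ _ hne (by rwa [Cardinal.mk_toType]) (fun i => ?_)
      exact V3 θ V hθ hsub hultra hproper hcomplete _ (hD _) _ hIio
    refine hup _ hmem _ (fun x hx => hx.1) ?_
    intro x hx
    have h1 : x ∈ Set.Iio θ.ord := by
      have := Set.mem_iInter.1 hx (Classical.arbitrary _)
      exact this.2
    refine ⟨h1, fun ζ hζ => ?_⟩
    have h2 := Set.mem_iInter.1 hx (e ⟨ζ, hζ⟩)
    rw [e.symm_apply_apply] at h2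
    exact h2.1

include hθ hsub hultra hproper hup hcomplete hnormal in
lemma V5 (Q : Ordinal → Prop) (D : Ordinal → Set Ordinal) (hD : ∀ ζ, D ζ ∈ V) :
    {x ∈ Set.Iio θ.ord | ∀ ζ, Q ζ → ζ < x → x ∈ D ζ} ∈ V := by
  classical
  set X := {x ∈ Set.Iio θ.ord | ∀ ζ, Q ζ → ζ < x → x ∈ D ζ} with hX
  by_contra hXV
  have hG : (Set.Iio θ.ord \ X) ∈ V := by
    rcases hultra X (fun x hx => hx.1) with h | h
    · exact absurd h hXV
    · exact h
  have key : ∀ x ∈ Set.Iio θ.ord \ X, ∃ ζ, Q ζ ∧ ζ < x ∧ x ∉ D ζ := by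
    intro x hx
    by_contra hc
    exact hx.2 ⟨hx.1, fun ζ hQ hζ => by
      by_contra hnD; exact hc ⟨ζ, hQ, hζ, hnD⟩⟩
  choose! g hgQ hglt hgnD using key
  obtain ⟨c, hc⟩ := hnormal g _ hG (fun x hx _ => hglt x hx)
  obtain ⟨x₀, hx₀⟩ := V2 V hproper _ hc
  have hQc : Q c := hx₀.2 ▸ hgQ _ hx₀.1
  have hmem := V3 θ V hθ hsub hultra hproper hcomplete _ hc _ (hD c)
  obtain ⟨y, hy⟩ := V2 V hproper _ hmem
  have : y ∉ D c := hy.1.2 ▸ hgnD _ hy.1.1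
  exact this hy.2

include hθ hsub hultra hproper hup hcomplete hnormal in
lemma V6 (n : ℕ) (S : List Ordinal → Set Ordinal) (hS : ∀ u, S u ∈ V) :
    {x ∈ Set.Iio θ.ord | ∀ u : List Ordinal, u.length = n → u.Chain' (· < ·) →
      (∀ z ∈ u, z < x) → x ∈ S u} ∈ V := by
  induction n generalizing S with
  | zero =>
    have h0 : S [] ∈ V := hS []
    have := V3 θ V hθ hsub hultra hproper hcomplete _ h0 _
      (V1 θ V hsub hultra hproper)
    refine hup _ this _ (fun x hx => hx.1) ?_
    intro x hx
    refine ⟨hx.2, fun u hu _ _ => ?_⟩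
    rw [List.length_eq_zero_iff] at hu
    exact hu ▸ hx.1
  | succ n ih =>
    have hhat : ∀ u' : List Ordinal,
        {x ∈ Set.Iio θ.ord | ∀ z, (∀ w ∈ u', w < z) → z < x → x ∈ S (u' ++ [z])} ∈ V :=
      fun u' => V5 θ V hθ hsub hultra hproper hup hcomplete hnormal
        (fun z => ∀ w ∈ u', w < z) (fun z => S (u' ++ [z])) (fun z => hS _)
    have hT := ih (fun u' => {x ∈ Set.Iio θ.ord |
        ∀ z, (∀ w ∈ u', w < z) → z < x → x ∈ S (u' ++ [z])}) hhat
    refine hup _ hT _ (fun x hx => hx.1) ?_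
    intro x hx
    refine ⟨hx.1, fun u hu hch hlt => ?_⟩
    have hune : u ≠ [] := by intro h; rw [h] at hu; simp at hu
    obtain ⟨u', z, rfl⟩ : ∃ u' z, u = u' ++ [z] :=
      ⟨u.dropLast, u.getLast hune, (List.dropLast_append_getLast hune).symm⟩
    have hpw := (List.isChain_iff_pairwise).1 hch
    rw [List.pairwise_append] at hpw
    have hlen : u'.length = n := by
      have := hu; rw [List.length_append] at this; simpa using this
    have hch' : u'.Chain' (· < ·) := (List.isChain_iff_pairwise).2 hpw.1
    have hx2 := hx.2 u' hlen hch' (fun w hw => hlt w (by simp [hw]))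
    exact hx2.2 z (fun w hw => hpw.2.2 w hw z (by simp)) (hlt z (by simp))

include hθ hsub hultra hproper hup hcomplete in
lemma V7 (n : ℕ) (b : Ordinal) (hb : b.card < θ) (D : List Ordinal → Set Ordinal)
    (hD : ∀ l, D l ∈ V) :
    {x ∈ Set.Iio θ.ord | ∀ l : List Ordinal, l.length ≤ n → (∀ z ∈ l, z < b) →
      x ∈ D l} ∈ V := by
  induction n generalizing D with
  | zero =>
    have := V3 θ V hθ hsub hultra hproper hcomplete _ (hD []) _
      (V1 θ V hsub hultra hproper)
    refine hup _ this _ (fun x hx => hx.1) ?_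
    intro x hx
    refine ⟨hx.2, fun l hl _ => ?_⟩
    rw [Nat.le_zero, List.length_eq_zero_iff] at hl
    exact hl ▸ hx.1
  | succ n ih =>
    have hhat : ∀ z : Ordinal,
        {x ∈ Set.Iio θ.ord | ∀ l', l'.length ≤ n → (∀ w ∈ l', w < b) →
          x ∈ D (z :: l')} ∈ V :=
      fun z => ih (fun l' => D (z :: l')) (fun l' => hD _)
    have hW := V4 θ V hθ hsub hultra hproper hup hcomplete b hb _ hhat
    have hfin := V3 θ V hθ hsub hultra hproper hcomplete _ hW _ (hD [])
    refine hup _ hfin _ (fun x hx => hx.1) ?_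
    intro x hx
    refine ⟨hx.1.1, fun l hl hz => ?_⟩
    match l with
    | [] => exact hx.2
    | z :: l' =>
      have hzb : z < b := hz z (by simp)
      have := hx.1.2 z hzb
      exact this.2 l' (by simpa using Nat.lt_succ_iff.1 (Nat.lt_of_lt_of_le (Nat.lt_succ_self _) hl)) (fun w hw => hz w (by simp [hw]))


end UF

lemma VFub (θ₁ θ₂ : Cardinal.{0}) (V₁ V₂ : Set (Set Ordinal.{0}))
    (hθ₁ : ℵ₀ < θ₁) (hθ₂ : ℵ₀ < θ₂) (hlt : θ₁ < θ₂)
    (hsub₁ : ∀ A ∈ V₁, A ⊆ Set.Iio θ₁.ord)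
    (hultra₁ : ∀ A ⊆ Set.Iio θ₁.ord, A ∈ V₁ ∨ (Set.Iio θ₁.ord \ A) ∈ V₁)
    (hproper₁ : (∅ : Set Ordinal) ∉ V₁)
    (hcomplete₁ : ∀ (ι : Type) (A : ι → Set Ordinal),
      Nonempty ι → #ι < θ₁ → (∀ i, A i ∈ V₁) → (⋂ i, A i) ∈ V₁)
    (hsub₂ : ∀ A ∈ V₂, A ⊆ Set.Iio θ₂.ord)
    (hultra₂ : ∀ A ⊆ Set.Iio θ₂.ord, A ∈ V₂ ∨ (Set.Iio θ₂.ord \ A) ∈ V₂)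
    (hproper₂ : (∅ : Set Ordinal) ∉ V₂)
    (hup₂ : ∀ A ∈ V₂, ∀ B ⊆ Set.Iio θ₂.ord, A ⊆ B → B ∈ V₂)
    (hcomplete₂ : ∀ (ι : Type) (A : ι → Set Ordinal),
      Nonempty ι → #ι < θ₂ → (∀ i, A i ∈ V₂) → (⋂ i, A i) ∈ V₂)
    (Q : Ordinal → Prop) (R : Ordinal → Ordinal → Prop)
    (hR : ∀ ζ, Q ζ → {x ∈ Set.Iio θ₁.ord | R x ζ} ∈ V₁) :
    {x ∈ Set.Iio θ₁.ord | {ζ ∈ Set.Iio θ₂.ord | Q ζ → R x ζ} ∈ V₂} ∈ V₁ := by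
  classical
  set X := {x ∈ Set.Iio θ₁.ord | {ζ ∈ Set.Iio θ₂.ord | Q ζ → R x ζ} ∈ V₂} with hX
  by_contra hXV
  have hG : (Set.Iio θ₁.ord \ X) ∈ V₁ := by
    rcases hultra₁ X (fun x hx => hx.1) with h | h
    · exact absurd h hXV
    · exact h
  have hGsub : (Set.Iio θ₁.ord \ X) ⊆ Set.Iio θ₁.ord := fun x hx => hx.1
  have hcompl : ∀ x ∈ Set.Iio θ₁.ord \ X,
      (Set.Iio θ₂.ord \ {ζ ∈ Set.Iio θ₂.ord | Q ζ → R x ζ}) ∈ V₂ := by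
    intro x hx
    have hnot : {ζ ∈ Set.Iio θ₂.ord | Q ζ → R x ζ} ∉ V₂ := fun h => hx.2 ⟨hx.1, h⟩
    rcases hultra₂ _ (fun ζ (hζ : ζ ∈ {ζ ∈ Set.Iio θ₂.ord | Q ζ → R x ζ}) => hζ.1) with h | h
    · exact absurd h hnot
    · exact h
  set D : Ordinal → Set Ordinal := fun x =>
    if h : x ∈ Set.Iio θ₁.ord \ X then Set.Iio θ₂.ord \ {ζ ∈ Set.Iio θ₂.ord | Q ζ → R x ζ}
    else Set.Iio θ₂.ord with hD
  have hDV : ∀ x, D x ∈ V₂ := by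
    intro x
    show (if h : x ∈ Set.Iio θ₁.ord \ X then
        Set.Iio θ₂.ord \ {ζ ∈ Set.Iio θ₂.ord | Q ζ → R x ζ} else Set.Iio θ₂.ord) ∈ V₂
    by_cases h : x ∈ Set.Iio θ₁.ord \ X
    · rw [dif_pos h]; exact hcompl x h
    · rw [dif_neg h]; exact V1 θ₂ V₂ hsub₂ hultra₂ hproper₂
  have hY := V4 θ₂ V₂ hθ₂ hsub₂ hultra₂ hproper₂ hup₂ hcomplete₂ θ₁.ord
    (by rwa [Cardinal.card_ord]) D hDV
  obtain ⟨ζ, hζ⟩ := V2 V₂ hproper₂ _ hY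
  have hζprop : ∀ x ∈ Set.Iio θ₁.ord \ X, Q ζ ∧ ¬ R x ζ := by
    intro x hx
    have hmm := hζ.2 x hx.1
    have hDx : D x = Set.Iio θ₂.ord \ {ζ ∈ Set.Iio θ₂.ord | Q ζ → R x ζ} := dif_pos hx
    rw [hDx] at hmm
    have h2 := hmm.2
    simp only [Set.mem_setOf_eq, not_and, Classical.not_imp] at h2
    exact h2 hmm.1
  obtain ⟨x₀, hx₀⟩ := V2 V₁ hproper₁ _ hG
  have hQζ : Q ζ := (hζprop x₀ hx₀).1
  have hZ := hR ζ hQζ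
  -- intersect G with Z
  have h2V : (Set.Iio θ₁.ord \ X) ∩ {x ∈ Set.Iio θ₁.ord | R x ζ} ∈ V₁ := by
    have h2 : (2 : Cardinal.{0}) < ℵ₀ := by exact_mod_cast Cardinal.nat_lt_aleph0 2
    have := hcomplete₁ Bool (fun b => if b then (Set.Iio θ₁.ord \ X) else {x ∈ Set.Iio θ₁.ord | R x ζ}) ⟨true⟩
      (lt_trans (by simpa using h2) hθ₁) (by rintro (_|_) <;> simpa [hG, hZ])
    have heq : (⋂ b : Bool, (fun b => if b then (Set.Iio θ₁.ord \ X) else {x ∈ Set.Iio θ₁.ord | R x ζ}) b)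
        = (Set.Iio θ₁.ord \ X) ∩ {x ∈ Set.Iio θ₁.ord | R x ζ} := by
      ext x; simp [Set.mem_iInter, Bool.forall_bool, and_comm]
    rwa [heq] at this
  obtain ⟨y, hy⟩ := V2 V₁ hproper₁ _ h2V
  exact (hζprop y hy.1).2 hy.2.2

section Main
variable (κ : Cardinal.{0}) (κs : {α : Ordinal // α < κ.ord} → Cardinal.{0})
    (hmeas : ∀ α, ℵ₀ < κs α)
    (hbelow : ∀ α, κs α < κ)
    (hinc : ∀ α β, α < β → κs α < κs β)
    (hdisc : ∀ α, ∃ c < κs α, ∀ β < α, κs β ≤ c)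
    (U : {α : Ordinal // α < κ.ord} → Set (Set Ordinal))
    (h_sub : ∀ α, ∀ A ∈ U α, A ⊆ Set.Iio (κs α).ord)
    (h_ultra : ∀ α, ∀ A ⊆ Set.Iio (κs α).ord, A ∈ U α ∨ (Set.Iio (κs α).ord \ A) ∈ U α)
    (h_proper : ∀ α, (∅ : Set Ordinal) ∉ U α)
    (h_up : ∀ α, ∀ A ∈ U α, ∀ B ⊆ Set.Iio (κs α).ord, A ⊆ B → B ∈ U α)
    (h_complete : ∀ α, ∀ (ι : Type) (A : ι → Set Ordinal),
      Nonempty ι → #ι < κs α → (∀ i, A i ∈ U α) → (⋂ i, A i) ∈ U α)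
    (h_normal : ∀ α (f : Ordinal → Ordinal), ∀ S ∈ U α,
      (∀ x ∈ S, x ≠ 0 → f x < x) → ∃ γ, {x | x ∈ S ∧ f x = γ} ∈ U α)

include hmeas hbelow hinc hdisc h_sub h_ultra h_proper h_up h_complete h_normal in
lemma main_zero (γ : {α : Ordinal // α < κ.ord} → ℕ)
    (hall : ∀ α, γ α = 0)
    (B : ({α : Ordinal // α < κ.ord} → List Ordinal) →
      {α : Ordinal // α < κ.ord} → Set Ordinal)
    (hB : ∀ s, IsStem κ κs s → (∀ α, (s α).length = γ α) →
      ∀ α, B s α ∈ U α ∧ ∀ x ∈ B s α, listMax (s α) ≤ x) :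
    ∃ C : {α : Ordinal // α < κ.ord} → Set Ordinal,
      (∀ α, C α ∈ U α) ∧
      ∀ s, IsStem κ κs s → (∀ α, (s α).length = γ α) →
        (∀ α, ∀ x ∈ s α, x ∈ C α) →
        ∀ α, ∀ x ∈ C α, listMax (s α) < x → x ∈ B s α := by
  have hstem : IsStem κ κs (fun _ => []) :=
    ⟨fun α => List.isChain_nil, fun α x hx => absurd hx List.not_mem_nil, by simp⟩
  have hlen : ∀ α, ((fun (_ : {α : Ordinal // α < κ.ord}) => ([] : List Ordinal)) α).length = γ α := by
    intro α; simp [hall]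
  refine ⟨fun α => B (fun _ => []) α, fun α => (hB _ hstem hlen α).1, ?_⟩
  intro s hs hl hmem α x hx hlt
  have : s = fun _ => [] := by
    funext β
    have := hl β
    rw [hall β] at this
    exact List.length_eq_zero_iff.1 this
  rw [this]
  exact hx

include hmeas hbelow hinc hdisc h_sub h_ultra h_proper h_up h_complete h_normal in
lemma main (n : ℕ) :
    ∀ (γ : {α : Ordinal // α < κ.ord} → ℕ) (F : Finset {α : Ordinal // α < κ.ord}),
    (∀ α, γ α ≠ 0 → α ∈ F) → (∑ β ∈ F, γ β) ≤ n →
    ∀ (B : ({α : Ordinal // α < κ.ord} → List Ordinal) →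
      {α : Ordinal // α < κ.ord} → Set Ordinal),
    (∀ s, IsStem κ κs s → (∀ α, (s α).length = γ α) →
      ∀ α, B s α ∈ U α ∧ ∀ x ∈ B s α, listMax (s α) ≤ x) →
    ∃ C : {α : Ordinal // α < κ.ord} → Set Ordinal,
      (∀ α, C α ∈ U α) ∧
      ∀ s, IsStem κ κs s → (∀ α, (s α).length = γ α) →
        (∀ α, ∀ x ∈ s α, x ∈ C α) →
        ∀ α, ∀ x ∈ C α, listMax (s α) < x → x ∈ B s α := by
  induction n with
  | zero =>
    intro γ F hsupp hsum B hB
    have hall : ∀ α, γ α = 0 := by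
      intro α
      by_contra h
      have h1 : γ α ≤ ∑ β ∈ F, γ β := Finset.single_le_sum (fun _ _ => Nat.zero_le _) (hsupp α h)
      omega
    exact main_zero κ κs hmeas hbelow hinc hdisc U h_sub h_ultra h_proper h_up
      h_complete h_normal γ hall B hB
  | succ n ih =>
    intro γ F hsupp hsum B hB
    classical
    by_cases hall : ∀ α, γ α = 0
    · exact main_zero κ κs hmeas hbelow hinc hdisc U h_sub h_ultra h_proper h_up
        h_complete h_normal γ hall B hB
    push_neg at hall
    obtain ⟨α₁, hα₁⟩ := hall
    -- the support inside F
    set F₀ : Finset {α : Ordinal // α < κ.ord} := F.filter (fun α => γ α ≠ 0) with hF₀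
    have hF₀ne : F₀.Nonempty := ⟨α₁, by simp [hF₀, hα₁, hsupp α₁ hα₁]⟩
    set δ := F₀.max' hF₀ne with hδ
    have hδF₀ : δ ∈ F₀ := F₀.max'_mem hF₀ne
    have hδ0 : γ δ ≠ 0 := by
      have h := hδF₀
      simp only [hF₀, Finset.mem_filter] at h
      exact h.2
    have hδmax : ∀ β, γ β ≠ 0 → β ≤ δ := by
      intro β hβ
      exact Finset.le_max' _ _ (by simp [hF₀, hβ, hsupp β hβ])
    -- reduced length function
    set γ' := Function.update γ δ (γ δ - 1) with hγ'
    have hγ'δ : γ' δ = γ δ - 1 := by rw [hγ']; simp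
    have hγ'ne : ∀ β, β ≠ δ → γ' β = γ β := by
      intro β hβ; rw [hγ']; simp [Function.update_of_ne hβ]
    have hsupp' : ∀ α, γ' α ≠ 0 → α ∈ F := by
      intro α hα
      by_cases h : α = δ
      · subst h; exact hsupp _ hδ0
      · rw [hγ'ne α h] at hα; exact hsupp α hα
    have hδF : δ ∈ F := hsupp δ hδ0
    have hsum' : (∑ β ∈ F, γ' β) ≤ n := by
      rw [hγ', Finset.sum_update_of_mem hδF]
      have h2 : (∑ β ∈ F, γ β) = γ δ + ∑ β ∈ F.erase δ, γ β := (Finset.add_sum_erase F γ hδF).symm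
      rw [Finset.erase_eq] at h2
      omega
    -- basic facts about the measures
    have hUIio : ∀ α, Set.Iio (κs α).ord ∈ U α :=
      fun α => V1 _ _ (h_sub α) (h_ultra α) (h_proper α)
    have hUne : ∀ α, ∀ A ∈ U α, A.Nonempty := fun α => V2 _ (h_proper α)
    have hUint : ∀ α, ∀ A ∈ U α, ∀ A' ∈ U α, A ∩ A' ∈ U α :=
      fun α => V3 _ _ (hmeas α) (h_sub α) (h_ultra α) (h_proper α) (h_complete α)
    have hordpos : ∀ α, (0 : Ordinal) < (κs α).ord := by
      intro α
      rw [Cardinal.lt_ord]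
      simpa using lt_trans Cardinal.aleph0_pos (hmeas α)
    -- extension machinery
    set valid : ({α : Ordinal // α < κ.ord} → List Ordinal) → Ordinal → Prop :=
      fun s' ζ => ζ < (κs δ).ord ∧ ∀ z ∈ s' δ, z < ζ with hvalid
    set Ext : ({α : Ordinal // α < κ.ord} → List Ordinal) → Ordinal →
        ({α : Ordinal // α < κ.ord} → List Ordinal) :=
      fun s' ζ => Function.update s' δ (s' δ ++ [ζ]) with hExt
    set Stem' : ({α : Ordinal // α < κ.ord} → List Ordinal) → Prop :=
      fun s' => IsStem κ κs s' ∧ ∀ α, (s' α).length = γ' α with hStem'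
    have hExtδ : ∀ s' ζ, Ext s' ζ δ = s' δ ++ [ζ] := by
      intro s' ζ; rw [hExt]; simp
    have hExtne : ∀ s' ζ α, α ≠ δ → Ext s' ζ α = s' α := by
      intro s' ζ α hα; rw [hExt]; simp [Function.update_of_ne hα]
    have hext : ∀ s', Stem' s' → ∀ ζ, valid s' ζ →
        IsStem κ κs (Ext s' ζ) ∧ ∀ α, ((Ext s' ζ) α).length = γ α := by
      intro s' hs' ζ hζ
      obtain ⟨⟨hch, hent, hfin⟩, hlen⟩ := hs'
      refine ⟨⟨?_, ?_, ?_⟩, ?_⟩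
      · intro α
        by_cases h : α = δ
        · subst h
          rw [hExtδ]
          show List.IsChain _ _
          rw [List.isChain_iff_pairwise, List.pairwise_append]
          exact ⟨List.isChain_iff_pairwise.1 (hch δ), List.pairwise_singleton _ _,
            fun z hz w hw => by rw [List.mem_singleton] at hw; subst hw; exact hζ.2 z hz⟩
        · rw [hExtne _ _ _ h]; exact hch α
      · intro α x hx
        by_cases h : α = δ
        · subst h
          rw [hExtδ] at hx
          rcases List.mem_append.1 hx with h | h
          · exact hent δ x h
          · rw [List.mem_singleton] at h; subst h; exact hζ.1
        · rw [hExtne _ _ _ h] at hx; exact hent α x hx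
      · refine Set.Finite.subset (hfin.insert δ) ?_
        intro α hα
        by_cases h : α = δ
        · simp [h]
        · rw [Set.mem_setOf_eq, hExtne _ _ _ h] at hα
          exact Set.mem_insert_iff.2 (Or.inr hα)
      · intro α
        by_cases h : α = δ
        · subst h
          rw [hExtδ, List.length_append, hlen δ, hγ'δ]
          simp
          omega
        · rw [hExtne _ _ _ h, hlen α, hγ'ne α h]
    -- a canonical valid extension point
    have hξ₀ : ∀ s', Stem' s' → valid s' (listMax (s' δ) + 1) := by
      intro s' hs'
      constructor
      · have h1 : listMax (s' δ) < (κs δ).ord := by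
          rw [listMax_lt_iff (hordpos δ)]
          exact fun z hz => hs'.1.2.1 δ z hz
        have := (Cardinal.isSuccLimit_ord (le_of_lt (hmeas δ))).succ_lt h1
        rwa [Ordinal.add_one_eq_succ]
      · intro z hz
        have := le_listMax hz
        have h2 : listMax (s' δ) < listMax (s' δ) + 1 := by
          rw [Ordinal.add_one_eq_succ]; exact Order.lt_succ _
        exact lt_of_le_of_lt this h2
    have hIci : ∀ s', Stem' s' → ∀ α,
        (Set.Iio (κs α).ord ∩ Set.Ici (listMax (s' α))) ∈ U α := by
      intro s' hs' α
      obtain ⟨hstem, hlens⟩ := hext s' hs' _ (hξ₀ s' hs')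
      have hBα := hB _ hstem hlens α
      refine h_up α _ hBα.1 _ (fun x hx => hx.1) ?_
      intro x hx
      refine ⟨h_sub α _ hBα.1 hx, ?_⟩
      have h2 := hBα.2 x hx
      by_cases h : α = δ
      · subst h
        rw [hExtδ, listMax_append] at h2
        exact le_trans (le_max_left _ _) h2
      · rwa [hExtne _ _ _ h] at h2
    -- the Fubini trace sets
    set Tx : ({α : Ordinal // α < κ.ord} → List Ordinal) → {α : Ordinal // α < κ.ord} →
        Ordinal → Set Ordinal :=
      fun s' α x => {ζ ∈ Set.Iio (κs δ).ord | valid s' ζ → x ∈ B (Ext s' ζ) α} with hTx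
    -- the derived family for the shorter length function
    set B' : ({α : Ordinal // α < κ.ord} → List Ordinal) →
        {α : Ordinal // α < κ.ord} → Set Ordinal :=
      fun s' α => Set.Iio (κs α).ord ∩ Set.Ici (listMax (s' α)) ∩
        (if α = δ then {x | ∀ ζ, valid s' ζ → ζ < x → x ∈ B (Ext s' ζ) α}
         else if α < δ then {x | Tx s' α x ∈ U δ}
         else {x | ∀ ζ, ζ < (κs δ).ord → valid s' ζ → x ∈ B (Ext s' ζ) α}) with hB'
    have hBExt : ∀ s', Stem' s' → ∀ ζ, valid s' ζ → ∀ α, B (Ext s' ζ) α ∈ U α := by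
      intro s' hs' ζ hζ α
      obtain ⟨h1, h2⟩ := hext s' hs' ζ hζ
      exact (hB _ h1 h2 α).1
    have hB'full : ∀ s', Stem' s' → ∀ α, B' s' α ∈ U α ∧
        ∀ x ∈ B' s' α, listMax (s' α) ≤ x := by
      intro s' hs' α
      have hXmem : (Set.Iio (κs α).ord ∩
          (if α = δ then {x | ∀ ζ, valid s' ζ → ζ < x → x ∈ B (Ext s' ζ) α}
           else if α < δ then {x | Tx s' α x ∈ U δ}
           else {x | ∀ ζ, ζ < (κs δ).ord → valid s' ζ → x ∈ B (Ext s' ζ) α})) ∈ U α := by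
        by_cases hαδ : α = δ
        · rw [if_pos hαδ]
          classical
          have hD : ∀ ζ, (if _ : valid s' ζ then B (Ext s' ζ) α else Set.Iio (κs α).ord) ∈ U α := by
            intro ζ
            by_cases h : valid s' ζ
            · rw [dif_pos h]; exact hBExt s' hs' ζ h α
            · rw [dif_neg h]; exact hUIio α
          have h5 := V5 _ _ (hmeas α) (h_sub α) (h_ultra α) (h_proper α) (h_up α)
            (h_complete α) (h_normal α) (valid s')
            (fun ζ => if _ : valid s' ζ then B (Ext s' ζ) α else Set.Iio (κs α).ord) hD
          have heq : {x ∈ Set.Iio (κs α).ord | ∀ ζ, valid s' ζ → ζ < x →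
              x ∈ (if _ : valid s' ζ then B (Ext s' ζ) α else Set.Iio (κs α).ord)} =
              Set.Iio (κs α).ord ∩ {x | ∀ ζ, valid s' ζ → ζ < x → x ∈ B (Ext s' ζ) α} := by
            ext x
            constructor
            · rintro ⟨h1, h2⟩
              refine ⟨h1, fun ζ hv hlt => ?_⟩
              have := h2 ζ hv hlt
              rwa [dif_pos hv] at this
            · rintro ⟨h1, h2⟩
              refine ⟨h1, fun ζ hv hlt => ?_⟩
              rw [dif_pos hv]
              exact h2 ζ hv hlt
          rwa [heq] at h5
        · rw [if_neg hαδ]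
          by_cases hαlt : α < δ
          · rw [if_pos hαlt]
            have hR : ∀ ζ, valid s' ζ → {x ∈ Set.Iio (κs α).ord | x ∈ B (Ext s' ζ) α} ∈ U α := by
              intro ζ hv
              have h1 := hBExt s' hs' ζ hv α
              have heq : {x ∈ Set.Iio (κs α).ord | x ∈ B (Ext s' ζ) α} = B (Ext s' ζ) α := by
                ext x
                exact ⟨fun h => h.2, fun h => ⟨h_sub α _ h1 h, h⟩⟩
              rwa [heq]
            have hfub := VFub (κs α) (κs δ) (U α) (U δ) (hmeas α) (hmeas δ)
              (hinc α δ hαlt) (h_sub α) (h_ultra α) (h_proper α) (h_complete α)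
              (h_sub δ) (h_ultra δ) (h_proper δ) (h_up δ) (h_complete δ)
              (valid s') (fun x ζ => x ∈ B (Ext s' ζ) α) hR
            have heq2 : {x ∈ Set.Iio (κs α).ord |
                {ζ ∈ Set.Iio (κs δ).ord | valid s' ζ → x ∈ B (Ext s' ζ) α} ∈ U δ} =
                Set.Iio (κs α).ord ∩ {x | Tx s' α x ∈ U δ} := by
              ext x
              exact ⟨fun h => ⟨h.1, h.2⟩, fun h => ⟨h.1, h.2⟩⟩
            rwa [heq2] at hfub
          · rw [if_neg hαlt]
            have hδα : δ < α := lt_of_le_of_ne (le_of_not_gt hαlt) (Ne.symm hαδ)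
            classical
            have hD : ∀ ζ, (if _ : valid s' ζ then B (Ext s' ζ) α else Set.Iio (κs α).ord) ∈ U α := by
              intro ζ
              by_cases h : valid s' ζ
              · rw [dif_pos h]; exact hBExt s' hs' ζ h α
              · rw [dif_neg h]; exact hUIio α
            have h4 := V4 _ _ (hmeas α) (h_sub α) (h_ultra α) (h_proper α) (h_up α)
              (h_complete α) (κs δ).ord (by rw [Cardinal.card_ord]; exact hinc δ α hδα)
              (fun ζ => if _ : valid s' ζ then B (Ext s' ζ) α else Set.Iio (κs α).ord) hD
            have heq : {x ∈ Set.Iio (κs α).ord | ∀ ζ < (κs δ).ord,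
                x ∈ (if _ : valid s' ζ then B (Ext s' ζ) α else Set.Iio (κs α).ord)} =
                Set.Iio (κs α).ord ∩ {x | ∀ ζ, ζ < (κs δ).ord → valid s' ζ → x ∈ B (Ext s' ζ) α} := by
              ext x
              constructor
              · rintro ⟨h1, h2⟩
                refine ⟨h1, fun ζ hζ hv => ?_⟩
                have := h2 ζ hζ
                rwa [dif_pos hv] at this
              · rintro ⟨h1, h2⟩
                refine ⟨h1, fun ζ hζ => ?_⟩
                by_cases hv : valid s' ζ
                · rw [dif_pos hv]; exact h2 ζ hζ hv
                · rw [dif_neg hv]; exact h1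
            rwa [heq] at h4
      constructor
      · have hcomb := hUint α _ (hIci s' hs' α) _ hXmem
        have heq3 : (Set.Iio (κs α).ord ∩ Set.Ici (listMax (s' α))) ∩
            (Set.Iio (κs α).ord ∩
            (if α = δ then {x | ∀ ζ, valid s' ζ → ζ < x → x ∈ B (Ext s' ζ) α}
             else if α < δ then {x | Tx s' α x ∈ U δ}
             else {x | ∀ ζ, ζ < (κs δ).ord → valid s' ζ → x ∈ B (Ext s' ζ) α})) = B' s' α := by
          rw [hB']
          ext x
          simp only [Set.mem_inter_iff]
          tauto
        rwa [heq3] at hcomb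
      · intro x hx
        rw [hB'] at hx
        exact hx.1.2
    -- apply the induction hypothesis
    have hstemlen : ∀ s', IsStem κ κs s' → (∀ α, (s' α).length = γ' α) → Stem' s' := by
      intro s' h1 h2; rw [hStem']; exact ⟨h1, h2⟩
    obtain ⟨C, hC1, hC2⟩ := ih γ' F hsupp' hsum' B'
      (fun s' h1 h2 α => hB'full s' (hstemlen s' h1 h2) α)
    -- cardinal bookkeeping below δ
    obtain ⟨c, hcκ, hcβ⟩ := hdisc δ
    set c' := max c ℵ₀ with hc'
    have hc'κ : c' < κs δ := max_lt hcκ (hmeas δ)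
    have hc'β : ∀ β, β < δ → (κs β).ord ≤ c'.ord :=
      fun β h => Cardinal.ord_le_ord.2 (le_trans (hcβ β h) (le_max_left c ℵ₀))
    have hδcard : (δ.1).card ≤ c' := by
      have hb : ∀ o, o < δ.1 → o ≤ c'.ord := by
        intro o ho
        have hoκ : o < κ.ord := lt_trans ho δ.2
        have h1 := ordle κ κs hbelow hinc o hoκ
        exact le_trans h1 (hc'β ⟨o, hoκ⟩ (Subtype.mk_lt_mk.2 ho))
      have h2 : δ.1 ≤ c'.ord + 1 := by
        by_contra hcon
        push_neg at hcon
        have := hb (c'.ord + 1) hcon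
        rw [Ordinal.add_one_eq_succ, Order.succ_le_iff] at this
        exact absurd this (lt_irrefl _)
      calc (δ.1).card ≤ (c'.ord + 1).card := Ordinal.card_le_card h2
        _ = c' + 1 := by rw [Ordinal.card_add, Ordinal.card_one, Cardinal.card_ord]
        _ = c' := Cardinal.add_one_eq (le_max_right c ℵ₀)
    -- coding of the part of a stem away from δ
    set L₀ := (F₀.erase δ).toList with hL₀
    set code : ({α : Ordinal // α < κ.ord} → List Ordinal) → List Ordinal :=
      fun s' => L₀.foldr (fun β acc => s' β ++ acc) [] with hcode
    set n₀ := (L₀.map γ').sum with hn₀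
    have hLδ : ∀ β ∈ L₀, β < δ := by
      intro β hβ
      rw [hL₀, Finset.mem_toList, Finset.mem_erase] at hβ
      exact lt_of_le_of_ne (Finset.le_max' _ _ hβ.2) hβ.1
    have hcode_len : ∀ s', Stem' s' → (code s').length = n₀ := by
      intro s' hs'
      rw [hcode, hn₀, fold_len]
      congr 1
      exact List.map_congr_left (fun β _ => hs'.2 β)
    have hcode_ent : ∀ s', Stem' s' → ∀ z ∈ code s', z < c'.ord := by
      intro s' hs' z hz
      rw [hcode] at hz
      obtain ⟨β, hβ, hmem⟩ := fold_mem L₀ s' z hz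
      exact lt_of_lt_of_le (hs'.1.2.1 β z hmem) (hc'β β (hLδ β hβ))
    have hcode_inj : ∀ s' s'', Stem' s' → Stem' s'' → s' δ = s'' δ →
        code s' = code s'' → s' = s'' := by
      intro s' s'' hs' hs'' hδeq hceq
      rw [hcode] at hceq
      have hL := fold_inj L₀ s' s''
        (fun β _ => by rw [hs'.2 β, hs''.2 β]) hceq
      funext β
      by_cases hβδ : β = δ
      · rw [hβδ]; exact hδeq
      · by_cases hβL : β ∈ L₀
        · exact hL β hβL
        · have hβF₀ : β ∉ F₀ := by
            intro h
            exact hβL (by rw [hL₀, Finset.mem_toList, Finset.mem_erase]; exact ⟨hβδ, h⟩)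
          have hγβ : γ β = 0 := by
            by_contra h
            exact hβF₀ (by rw [hF₀, Finset.mem_filter]; exact ⟨hsupp β h, h⟩)
          have h1 : (s' β).length = 0 := by rw [hs'.2 β, hγ'ne β hβδ, hγβ]
          have h2 : (s'' β).length = 0 := by rw [hs''.2 β, hγ'ne β hβδ, hγβ]
          rw [List.length_eq_zero_iff.1 h1, List.length_eq_zero_iff.1 h2]
    -- the diagonal shrinking set at δ
    set S4 : {α : Ordinal // α < κ.ord} → Ordinal → List Ordinal → List Ordinal → Set Ordinal :=
      fun α x l u => {ξ ∈ Set.Iio (κs δ).ord | ∀ s', Stem' s' → s' δ = u → code s' = l →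
        valid s' ξ → Tx s' α x ∈ U δ → x ∈ B (Ext s' ξ) α} with hS4def
    have hS4 : ∀ α x l u, S4 α x l u ∈ U δ := by
      intro α x l u
      rw [hS4def]
      by_cases h : ∃ s', Stem' s' ∧ s' δ = u ∧ code s' = l ∧ Tx s' α x ∈ U δ
      · obtain ⟨s₀, hs₀, hu₀, hl₀, hT₀⟩ := h
        refine h_up δ _ hT₀ _ (fun ζ hζ => hζ.1) ?_
        intro ζ hζ
        refine ⟨hζ.1, ?_⟩
        intro s' hs' hu hl hv hT
        have heq : s' = s₀ := hcode_inj _ _ hs' hs₀ (hu.trans hu₀.symm) (hl.trans hl₀.symm)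
        rw [heq]
        rw [heq] at hv
        exact hζ.2 hv
      · refine h_up δ _ (hUIio δ) _ (fun ζ hζ => hζ.1) ?_
        intro ζ hζ
        exact ⟨hζ, fun s' hs' hu hl hv hT => absurd ⟨s', hs', hu, hl, hT⟩ h⟩
    have hS3 : ∀ α x l, {ξ ∈ Set.Iio (κs δ).ord | ∀ u : List Ordinal,
        u.length = γ δ - 1 → u.Chain' (· < ·) → (∀ z ∈ u, z < ξ) →
        ξ ∈ S4 α x l u} ∈ U δ :=
      fun α x l => V6 _ _ (hmeas δ) (h_sub δ) (h_ultra δ) (h_proper δ) (h_up δ)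
        (h_complete δ) (h_normal δ) (γ δ - 1) (S4 α x l) (fun u => hS4 α x l u)
    have hS2 : ∀ α x, {ξ ∈ Set.Iio (κs δ).ord | ∀ l : List Ordinal,
        l.length ≤ n₀ → (∀ z ∈ l, z < c'.ord) →
        ξ ∈ {ξ ∈ Set.Iio (κs δ).ord | ∀ u : List Ordinal,
          u.length = γ δ - 1 → u.Chain' (· < ·) → (∀ z ∈ u, z < ξ) →
          ξ ∈ S4 α x l u}} ∈ U δ :=
      fun α x => V7 _ _ (hmeas δ) (h_sub δ) (h_ultra δ) (h_proper δ) (h_up δ)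
        (h_complete δ) n₀ c'.ord (by rw [Cardinal.card_ord]; exact hc'κ) _
        (fun l => hS3 α x l)
    have hS1 : ∀ α : {α : Ordinal // α < κ.ord}, {ξ ∈ Set.Iio (κs δ).ord | ∀ x, x < c'.ord →
        ξ ∈ {ξ ∈ Set.Iio (κs δ).ord | ∀ l : List Ordinal,
          l.length ≤ n₀ → (∀ z ∈ l, z < c'.ord) →
          ξ ∈ {ξ ∈ Set.Iio (κs δ).ord | ∀ u : List Ordinal,
            u.length = γ δ - 1 → u.Chain' (· < ·) → (∀ z ∈ u, z < ξ) →
            ξ ∈ S4 α x l u}}} ∈ U δ :=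
      fun α => V4 _ _ (hmeas δ) (h_sub δ) (h_ultra δ) (h_proper δ) (h_up δ)
        (h_complete δ) c'.ord (by rw [Cardinal.card_ord]; exact hc'κ) _
        (fun x => hS2 α x)
    classical
    set Δ : Set Ordinal := {ξ ∈ Set.Iio (κs δ).ord |
      ∀ α : {α : Ordinal // α < κ.ord}, α < δ → ∀ x, x < (κs α).ord →
      ∀ s', Stem' s' → valid s' ξ → Tx s' α x ∈ U δ → x ∈ B (Ext s' ξ) α} with hΔdef
    have hΔ : Δ ∈ U δ := by
      set D : Ordinal → Set Ordinal := fun a =>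
        if h : a < κ.ord then
          {ξ ∈ Set.Iio (κs δ).ord | ∀ x, x < c'.ord →
            ξ ∈ {ξ ∈ Set.Iio (κs δ).ord | ∀ l : List Ordinal,
              l.length ≤ n₀ → (∀ z ∈ l, z < c'.ord) →
              ξ ∈ {ξ ∈ Set.Iio (κs δ).ord | ∀ u : List Ordinal,
                u.length = γ δ - 1 → u.Chain' (· < ·) → (∀ z ∈ u, z < ξ) →
                ξ ∈ S4 ⟨a, h⟩ x l u}}}
        else Set.Iio (κs δ).ord with hDdef
      have hD : ∀ a, D a ∈ U δ := by
        intro a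
        show (if h : a < κ.ord then _ else _) ∈ U δ
        by_cases h : a < κ.ord
        · rw [dif_pos h]; exact hS1 ⟨a, h⟩
        · rw [dif_neg h]; exact hUIio δ
      have h4 := V4 _ _ (hmeas δ) (h_sub δ) (h_ultra δ) (h_proper δ) (h_up δ)
        (h_complete δ) δ.1 (lt_of_le_of_lt hδcard hc'κ) D hD
      refine h_up δ _ h4 _ (fun ξ hξ => hξ.1) ?_
      intro ξ hξ
      refine ⟨hξ.1, ?_⟩
      intro α hαδ x hx s' hs' hv hT
      have ha : α.1 < δ.1 := Subtype.coe_lt_coe.2 hαδ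
      have h5 := hξ.2 α.1 ha
      have h5b : ξ ∈ (if h : α.1 < κ.ord then
          {ξ ∈ Set.Iio (κs δ).ord | ∀ x, x < c'.ord →
            ξ ∈ {ξ ∈ Set.Iio (κs δ).ord | ∀ l : List Ordinal,
              l.length ≤ n₀ → (∀ z ∈ l, z < c'.ord) →
              ξ ∈ {ξ ∈ Set.Iio (κs δ).ord | ∀ u : List Ordinal,
                u.length = γ δ - 1 → u.Chain' (· < ·) → (∀ z ∈ u, z < ξ) →
                ξ ∈ S4 ⟨α.1, h⟩ x l u}}}
        else Set.Iio (κs δ).ord) := h5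
      rw [dif_pos α.2] at h5b
      have hxc' : x < c'.ord := lt_of_lt_of_le hx (hc'β α hαδ)
      have h6 := (h5b.2 x hxc').2 (code s')
        (by rw [hcode_len s' hs']) (hcode_ent s' hs')
      have h7 := h6.2 (s' δ) (by rw [hs'.2 δ, hγ'δ]) (hs'.1.1 δ) (fun z hz => hv.2 z hz)
      rw [hS4def] at h7
      exact h7.2 s' hs' rfl rfl hv hT
    -- the final family
    set C'' : {α : Ordinal // α < κ.ord} → Set Ordinal :=
      Function.update C δ (C δ ∩ Δ) with hC''
    have hC''δ : C'' δ = C δ ∩ Δ := by rw [hC'']; simp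
    have hC''ne : ∀ β, β ≠ δ → C'' β = C β := by
      intro β hβ; rw [hC'']; simp [Function.update_of_ne hβ]
    have hC''sub : ∀ β, C'' β ⊆ C β := by
      intro β
      by_cases hβ : β = δ
      · rw [hβ, hC''δ]; exact Set.inter_subset_left
      · rw [hC''ne β hβ]
    refine ⟨C'', ?_, ?_⟩
    · intro β
      by_cases hβ : β = δ
      · rw [hβ, hC''δ]; exact hUint δ _ (hC1 δ) _ hΔ
      · rw [hC''ne β hβ]; exact hC1 β
    intro s hs hlen hmem α x hx hlt
    -- decompose s at δ
    have hsδne : s δ ≠ [] := by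
      intro h
      have h1 := hlen δ
      rw [h] at h1
      exact hδ0 h1.symm
    set ξ := (s δ).getLast hsδne with hξdef
    set u' := (s δ).dropLast with hu'def
    have hdec : u' ++ [ξ] = s δ := List.dropLast_append_getLast hsδne
    set s' := Function.update s δ u' with hs'def
    have hs'δ : s' δ = u' := by rw [hs'def]; simp
    have hs'ne : ∀ β, β ≠ δ → s' β = s β := by
      intro β hβ; rw [hs'def]; simp [Function.update_of_ne hβ]
    have hpw : ∀ z ∈ u', z < ξ := by
      intro z hz
      have hch := hs.1 δ
      rw [← hdec] at hch
      change List.IsChain _ _ at hch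
      rw [List.isChain_iff_pairwise, List.pairwise_append] at hch
      exact hch.2.2 z hz ξ (by simp)
    have hs'stem : Stem' s' := by
      rw [hStem']
      refine ⟨⟨?_, ?_, ?_⟩, ?_⟩
      · intro β
        by_cases hβ : β = δ
        · rw [hβ, hs'δ, hu'def]
          exact (hs.1 δ).sublist (List.dropLast_sublist _)
        · rw [hs'ne β hβ]; exact hs.1 β
      · intro β z hz
        by_cases hβ : β = δ
        · subst hβ
          rw [hs'δ, hu'def] at hz
          exact hs.2.1 δ z ((List.dropLast_sublist _).subset hz)
        · rw [hs'ne β hβ] at hz; exact hs.2.1 β z hz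
      · refine Set.Finite.subset (hs.2.2.insert δ) ?_
        intro β hβ
        by_cases h : β = δ
        · simp [h]
        · rw [Set.mem_setOf_eq, hs'ne β h] at hβ
          exact Set.mem_insert_iff.2 (Or.inr hβ)
      · intro β
        by_cases hβ : β = δ
        · rw [hβ, hs'δ, hu'def, List.length_dropLast, hlen δ, hγ'δ]
        · rw [hs'ne β hβ, hlen β, hγ'ne β hβ]
    have hξmem : ξ ∈ s δ := List.getLast_mem hsδne
    have hvξ : valid s' ξ := by
      rw [hvalid]
      refine ⟨hs.2.1 δ ξ hξmem, ?_⟩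
      intro z hz
      rw [hs'δ] at hz
      exact hpw z hz
    have hExts : Ext s' ξ = s := by
      rw [hExt]
      simp only
      rw [hs'δ, hdec, hs'def, Function.update_idem, Function.update_eq_self]
    have hmem' : ∀ β, ∀ z ∈ s' β, z ∈ C β := by
      intro β z hz
      by_cases hβ : β = δ
      · subst hβ
        rw [hs'δ, hu'def] at hz
        have h1 := hmem δ z ((List.dropLast_sublist _).subset hz)
        rw [hC''δ] at h1
        exact h1.1
      · rw [hs'ne β hβ] at hz
        have h1 := hmem β z hz
        rwa [hC''ne β hβ] at h1
    have hξC : ξ ∈ C δ ∩ Δ := by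
      have := hmem δ ξ hξmem
      rwa [hC''δ] at this
    have hξlt : ξ ≤ listMax (s δ) := le_listMax hξmem
    have hs'max : listMax (s' δ) ≤ listMax (s δ) := by
      rw [hs'δ, ← hdec, listMax_append]
      exact le_max_left _ _
    by_cases hαδ : α = δ
    · have hlt2 : listMax (s δ) < x := by rwa [hαδ] at hlt
      have hxC : x ∈ C α := by
        have h0 := hx
        rw [hαδ, hC''δ] at h0
        rw [hαδ]
        exact h0.1
      have hlt' : listMax (s' α) < x := by
        rw [hαδ]
        exact lt_of_le_of_lt hs'max hlt2
      have hBm := hC2 s' hs'stem.1 hs'stem.2 hmem' α x hxC hlt'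
      simp only [hB'] at hBm
      rw [if_pos hαδ] at hBm
      have h3 := hBm.2
      rw [Set.mem_setOf_eq] at h3
      have h4 := h3 ξ hvξ (lt_of_le_of_lt hξlt hlt2)
      rwa [hExts] at h4
    · have hxC : x ∈ C α := by rwa [hC''ne α hαδ] at hx
      have hsα : s' α = s α := hs'ne α hαδ
      have hlt' : listMax (s' α) < x := by rwa [hsα]
      have hBm := hC2 s' hs'stem.1 hs'stem.2 hmem' α x hxC hlt'
      simp only [hB'] at hBm
      rw [if_neg hαδ] at hBm
      by_cases hαlt : α < δ
      · rw [if_pos hαlt] at hBm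
        have hT : Tx s' α x ∈ U δ := hBm.2
        have hΔξ := hξC.2
        rw [hΔdef] at hΔξ
        have hxord : x < (κs α).ord := h_sub α _ (hC1 α) hxC
        have h4 := hΔξ.2 α hαlt x hxord s' hs'stem hvξ hT
        rwa [hExts] at h4
      · rw [if_neg hαlt] at hBm
        have h3 := hBm.2
        rw [Set.mem_setOf_eq] at h3
        have h4 := h3 ξ hvξ.1 hvξ
        rwa [hExts] at h4





end Main

/-- Finite diagonal intersection for a discrete product of measures. -/
theorem finite_diagonal_intersection
    (κ : Cardinal.{0}) (hreg : κ.IsRegular)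
    (κs : {α : Ordinal // α < κ.ord} → Cardinal.{0})
    (hmeas : ∀ α, ℵ₀ < κs α)
    (hbelow : ∀ α, κs α < κ)
    (hinc : ∀ α β, α < β → κs α < κs β)
    (hdisc : ∀ α, ∃ c < κs α, ∀ β < α, κs β ≤ c)
    (U : {α : Ordinal // α < κ.ord} → Set (Set Ordinal))
    (h_sub : ∀ α, ∀ A ∈ U α, A ⊆ Set.Iio (κs α).ord)
    (h_ultra : ∀ α, ∀ A ⊆ Set.Iio (κs α).ord, A ∈ U α ∨ (Set.Iio (κs α).ord \ A) ∈ U α)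
    (h_proper : ∀ α, (∅ : Set Ordinal) ∉ U α)
    (h_up : ∀ α, ∀ A ∈ U α, ∀ B ⊆ Set.Iio (κs α).ord, A ⊆ B → B ∈ U α)
    (h_complete : ∀ α, ∀ (ι : Type) (A : ι → Set Ordinal),
      Nonempty ι → #ι < κs α → (∀ i, A i ∈ U α) → (⋂ i, A i) ∈ U α)
    (h_normal : ∀ α (f : Ordinal → Ordinal), ∀ S ∈ U α,
      (∀ x ∈ S, x ≠ 0 → f x < x) → ∃ γ, {x | x ∈ S ∧ f x = γ} ∈ U α)
    -- the fixed length sequence, an element of `⊕_{α<κ} ω`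
    (γ : {α : Ordinal // α < κ.ord} → ℕ) (hγ : {α | γ α ≠ 0}.Finite)
    -- the given family of large sets indexed by stems with length sequence γ
    (B : ({α : Ordinal // α < κ.ord} → List Ordinal) →
      {α : Ordinal // α < κ.ord} → Set Ordinal)
    (hB : ∀ s, IsStem κ κs s → (∀ α, (s α).length = γ α) →
      ∀ α, B s α ∈ U α ∧ ∀ x ∈ B s α, listMax (s α) ≤ x) :
    ∃ C : {α : Ordinal // α < κ.ord} → Set Ordinal,
      (∀ α, C α ∈ U α) ∧
      ∀ s, IsStem κ κs s → (∀ α, (s α).length = γ α) →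
        (∀ α, ∀ x ∈ s α, x ∈ C α) →
        ∀ α, ∀ x ∈ C α, listMax (s α) < x → x ∈ B s α := by
  exact main κ κs hmeas hbelow hinc hdisc U h_sub h_ultra h_proper h_up h_complete
    h_normal (∑ β ∈ hγ.toFinset, γ β) γ hγ.toFinset
    (fun α h => hγ.mem_toFinset.2 h) le_rfl B hB
end
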